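/- arXiv:2207.08965 — 2 statements merged into one kernel-verified Lean document; each statement's English description precedes it below -/
import Mathlib

section
/- Let P be a flow-based polytope whose edge set E is connected when viewed as a set of undirected edges. Then for every root r ∈ [n] and every x ∈ P with x_e ∈ (0,1) for all e ∈ E, one has ∑_{f vertex of P} P_{f,r}(x) > 0. -/
/-!
Since `P` is nonempty and flow polytopes are integral, `P` has a vertex `f` (push `x` along a
circulation supported on its fractional edges until one more edge becomes integral). For that
`f`, `y = M_f(x)` is a nonnegative circulation, and as `0 < x_e < 1` on `E` every edge of `E`
carries positive `y` in at least one direction. A nonnegative circulation puts every positive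
edge on a positive cycle, so the positive edges of `y` span a strongly connected graph and
contain an arborescence `A` rooted at `r`. Each edge of `A` is the `f`-flip of an edge of `E`,
so `A = Flip_f(T)` for a directed tree `T ⊆ E`, whose term makes `P_{f,r}(x)` positive; all
other terms of the sum are nonnegative.
-/

open Finset

open scoped Classical

/-- The set `E₀` of non-loop directed edges on vertex set `Fin n`. -/
def E0 (n : ℕ) : Finset (Fin n × Fin n) :=
  Finset.univ.filter (fun e => e.1 ≠ e.2)

/-- The reverse of a directed edge. -/
def rev {n : ℕ} (e : Fin n × Fin n) : Fin n × Fin n := (e.2, e.1)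

/-- The underlying undirected (simple) graph of a set of directed edges. -/
def undirGraph (n : ℕ) (D : Finset (Fin n × Fin n)) : SimpleGraph (Fin n) where
  Adj u v := u ≠ v ∧ ((u, v) ∈ D ∨ (v, u) ∈ D)
  symm := ⟨fun u v h => ⟨h.1.symm, h.2.symm⟩⟩
  loopless := ⟨fun u h => h.1 rfl⟩

/-- There is a directed walk from `i` to `j` using only edges in `D`. -/
def reachesIn (n : ℕ) (D : Finset (Fin n × Fin n)) (i j : Fin n) : Prop :=
  Relation.ReflTransGen (fun a b => (a, b) ∈ D) i j

/-- `T` is a directed tree: `n-1` non-loop directed edges whose underlying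
undirected edges form a spanning tree of `Fin n`. -/
def IsDirTree (n : ℕ) (T : Finset (Fin n × Fin n)) : Prop :=
  T ⊆ E0 n ∧ T.card = n - 1 ∧ (undirGraph n T).Connected

/-- `A` is an arborescence rooted at `r`: a directed tree such that from every
vertex there is a directed walk to `r` using only edges of `A`. -/
def IsArb (n : ℕ) (r : Fin n) (A : Finset (Fin n × Fin n)) : Prop :=
  IsDirTree n A ∧ ∀ v : Fin n, reachesIn n A v r

/-- `Flip_f` of a single edge: reverse the edge iff `f e = 1`. -/
noncomputable def flipEdge (n : ℕ) (f : Fin n × Fin n → ℝ) (e : Fin n × Fin n) :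
    Fin n × Fin n :=
  if f e = 1 then rev e else e

/-- `Flip_f` of a set of edges. -/
noncomputable def flipSet (n : ℕ) (f : Fin n × Fin n → ℝ)
    (T : Finset (Fin n × Fin n)) : Finset (Fin n × Fin n) :=
  T.image (flipEdge n f)

/-- Membership in the flow-based polytope with variable edge set `E` and
demands `d` (points are extended by zero outside `E`). -/
def memFlowPolytope (n : ℕ) (E : Finset (Fin n × Fin n)) (d : Fin n → ℤ)
    (x : Fin n × Fin n → ℝ) : Prop :=
  (∀ e, e ∉ E → x e = 0) ∧ (∀ e ∈ E, x e ∈ Set.Icc (0 : ℝ) 1) ∧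
    ∀ v : Fin n, (∑ i, x (v, i)) - (∑ i, x (i, v)) = (d v : ℝ)

/-- A vertex of the flow-based polytope: a 0/1 point of the polytope. -/
def IsVertex (n : ℕ) (E : Finset (Fin n × Fin n)) (d : Fin n → ℤ)
    (f : Fin n × Fin n → ℝ) : Prop :=
  memFlowPolytope n E d f ∧ ∀ e ∈ E, f e = 0 ∨ f e = 1

/-- The 0/1 indicator of a set of edges. -/
def ind (n : ℕ) (S : Finset (Fin n × Fin n)) : Fin n × Fin n → ℝ :=
  fun e => if e ∈ S then 1 else 0

/-- The vertices of the flow-based polytope, encoded by their supports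
(sets of edges carrying flow `1`). -/
noncomputable def flowVertices (n : ℕ) (E : Finset (Fin n × Fin n)) (d : Fin n → ℤ) :
    Finset (Finset (Fin n × Fin n)) :=
  Finset.univ.filter (fun S => S ⊆ E ∧ memFlowPolytope n E d (ind n S))

/-- The polynomial `P_{f,r}(x)` of the Bernoulli factory. Since `f` is 0/1,
`x_e^{f_e}(1-x_e)^{1-f_e}` is `x_e` if `f_e = 1` and `1 - x_e` otherwise, and
`x_e^{1-f_e}(1-x_e)^{f_e}` is `1 - x_e` if `f_e = 1` and `x_e` otherwise. -/
noncomputable def Pfr (n : ℕ) (E : Finset (Fin n × Fin n))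
    (f : Fin n × Fin n → ℝ) (r : Fin n) (x : Fin n × Fin n → ℝ) : ℝ :=
  (∏ e ∈ E, if f e = 1 then x e else 1 - x e) *
    ∑ T ∈ Finset.univ.filter
        (fun T : Finset (Fin n × Fin n) =>
          IsDirTree n T ∧ T ⊆ E ∧ IsArb n r (flipSet n f T)),
      ∏ e ∈ T, (if f e = 1 then 1 - x e else x e)

/-- Membership in the circulation hyperplane `Circ̄`. -/
def memCircBar (n : ℕ) (y : Fin n × Fin n → ℝ) : Prop :=
  ∀ v : Fin n,
    (∑ i ∈ Finset.univ.filter (fun i => i ≠ v), y (v, i)) -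
      (∑ i ∈ Finset.univ.filter (fun i => i ≠ v), y (i, v)) = 0

/-- The arborescence-generating polynomial `SArb_r(y)`. -/
noncomputable def SArb (n : ℕ) (r : Fin n) (y : Fin n × Fin n → ℝ) : ℝ :=
  ∑ A ∈ Finset.univ.filter (fun A : Finset (Fin n × Fin n) => IsArb n r A),
    ∏ e ∈ A, y e

/-- The map `M_f`: `M_f(x)_e = x_e (1 - f_e) + (1 - x_ē) f_ē`. -/
def Mf (n : ℕ) (f x : Fin n × Fin n → ℝ) : Fin n × Fin n → ℝ :=
  fun e => x e * (1 - f e) + (1 - x (rev e)) * f (rev e)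

section

variable {n : ℕ}

def divergence (n : ℕ) : (Fin n × Fin n → ℝ) →ₗ[ℝ] Fin n → ℝ where
  toFun g v := ∑ i, g (v, i) - ∑ i, g (i, v)
  map_add' g h := by
    ext v
    simp only [Pi.add_apply, sum_add_distrib]
    ring
  map_smul' c g := by
    ext v
    simp only [Pi.smul_apply, smul_eq_mul, ← mul_sum, RingHom.id_apply]
    ring

lemma divergence_apply (g : Fin n × Fin n → ℝ) (v : Fin n) :
    divergence n g v = ∑ i, g (v, i) - ∑ i, g (i, v) := rfl

lemma sum_divergence_eq_flux (g : Fin n × Fin n → ℝ) (C : Finset (Fin n)) :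
    ∑ v ∈ C, divergence n g v =
      ∑ a ∈ C, ∑ b ∈ Cᶜ, g (a, b) - ∑ a ∈ Cᶜ, ∑ b ∈ C, g (a, b) := by
  have hout : ∀ v, ∑ i, g (v, i) = ∑ i ∈ C, g (v, i) + ∑ i ∈ Cᶜ, g (v, i) :=
    fun v => (sum_add_sum_compl C _).symm
  have hin : ∀ v, ∑ i, g (i, v) = ∑ i ∈ C, g (i, v) + ∑ i ∈ Cᶜ, g (i, v) :=
    fun v => (sum_add_sum_compl C _).symm
  simp only [divergence_apply, sum_sub_distrib, hout, hin, sum_add_distrib]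
  rw [sum_comm (s := C) (t := Cᶜ) (f := fun v i => g (i, v)),
    sum_comm (s := C) (t := C) (f := fun v i => g (i, v))]
  ring

lemma sum_divergence_eq_zero (g : Fin n × Fin n → ℝ) : ∑ v, divergence n g v = 0 := by
  simpa using sum_divergence_eq_flux g univ

lemma sum_out_eq_sum_filter {F : Finset (Fin n × Fin n)} {g : Fin n × Fin n → ℝ}
    (hg : ∀ e ∉ F, g e = 0) (v : Fin n) : ∑ i, g (v, i) = ∑ e ∈ F with e.1 = v, g e := by
  rw [sum_filter, sum_subset (subset_univ F) (fun e _ he => by simp [hg e he]),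
    Fintype.sum_prod_type, sum_eq_single v (fun b _ hb => sum_eq_zero fun i _ => if_neg hb)
    (by simp)]
  simp

lemma sum_in_eq_sum_filter {F : Finset (Fin n × Fin n)} {g : Fin n × Fin n → ℝ}
    (hg : ∀ e ∉ F, g e = 0) (v : Fin n) : ∑ i, g (i, v) = ∑ e ∈ F with e.2 = v, g e := by
  rw [sum_filter, sum_subset (subset_univ F) (fun e _ he => by simp [hg e he]),
    Fintype.sum_prod_type_right, sum_eq_single v (fun b _ hb => sum_eq_zero fun i _ => if_neg hb)
    (by simp)]
  simp

def degree (F : Finset (Fin n × Fin n)) (v : Fin n) : ℕ :=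
  #{e ∈ F | e.1 = v} + #{e ∈ F | e.2 = v}

def vertexSet (F : Finset (Fin n × Fin n)) : Finset (Fin n) :=
  F.image Prod.fst ∪ F.image Prod.snd

lemma sum_degree (F : Finset (Fin n × Fin n)) : ∑ v, degree F v = 2 * #F := by
  simp only [degree, sum_add_distrib]
  rw [← card_eq_sum_card_fiberwise (fun _ _ => mem_univ _),
    ← card_eq_sum_card_fiberwise (fun _ _ => mem_univ _)]
  ring

lemma degree_pos {F : Finset (Fin n × Fin n)} {v : Fin n} (hv : v ∈ vertexSet F) :
    0 < degree F v := by
  simp only [vertexSet, mem_union, mem_image] at hv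
  unfold degree
  rcases hv with ⟨e, he, rfl⟩ | ⟨e, he, rfl⟩
  · exact Nat.add_pos_left (card_pos.2 ⟨e, by simpa using he⟩) _
  · exact Nat.add_pos_right _ (card_pos.2 ⟨e, by simpa using he⟩)

lemma card_vertexSet_le {F : Finset (Fin n × Fin n)} (hdeg : ∀ v, degree F v ≠ 1) :
    #(vertexSet F) ≤ #F := by
  have h2 : ∀ v ∈ vertexSet F, 2 ≤ degree F v := fun v hv => by
    have := degree_pos hv
    have := hdeg v
    omega
  have hsum : #(vertexSet F) * 2 ≤ ∑ v ∈ vertexSet F, degree F v := by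
    simpa using card_nsmul_le_sum _ _ _ h2
  have := sum_le_sum_of_subset (f := degree F) (subset_univ (vertexSet F))
  rw [sum_degree] at this
  omega

lemma divergence_eq_zero_of_notMem_vertexSet {F : Finset (Fin n × Fin n)}
    {g : Fin n × Fin n → ℝ} (hg : ∀ e ∉ F, g e = 0) {v : Fin n} (hv : v ∉ vertexSet F) :
    divergence n g v = 0 := by
  have hout : ∀ e ∈ F, e.1 ≠ v := fun e he h =>
    hv (mem_union_left _ (mem_image.2 ⟨e, he, h⟩))
  have hin : ∀ e ∈ F, e.2 ≠ v := fun e he h =>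
    hv (mem_union_right _ (mem_image.2 ⟨e, he, h⟩))
  rw [divergence_apply, sum_out_eq_sum_filter hg, sum_in_eq_sum_filter hg,
    filter_false_of_mem hout, filter_false_of_mem hin]
  simp

/-- The divergence map `ℝ^F → ℝ^(V(F) \ {v₀})` has a nontrivial kernel since `|V(F)| ≤ |F|`;
a function supported on `F` with zero divergence off `v₀` has zero divergence at `v₀` too. -/
lemma exists_circulation {F : Finset (Fin n × Fin n)} (hF : F.Nonempty)
    (hdeg : ∀ v, degree F v ≠ 1) :
    ∃ g : Fin n × Fin n → ℝ, g ≠ 0 ∧ (∀ e ∉ F, g e = 0) ∧ divergence n g = 0 := by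
  obtain ⟨e₀, he₀⟩ := hF
  have hv₀ : e₀.1 ∈ vertexSet F := mem_union_left _ (mem_image_of_mem _ he₀)
  set W := (vertexSet F).erase e₀.1
  let ext := Function.ExtendByZero.linearMap ℝ ((↑) : F → Fin n × Fin n)
  let φ := LinearMap.funLeft ℝ ℝ ((↑) : W → Fin n) ∘ₗ divergence n ∘ₗ ext
  have hlt : Module.finrank ℝ (W → ℝ) < Module.finrank ℝ (F → ℝ) := by
    have := card_vertexSet_le hdeg
    have := card_pos.2 ⟨_, hv₀⟩
    simp only [Module.finrank_fintype_fun_eq_card, Fintype.card_coe, W, card_erase_of_mem hv₀]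
    omega
  obtain ⟨c, hc, hc0⟩ :=
    Submodule.exists_mem_ne_zero_of_ne_bot (LinearMap.ker_ne_bot_of_finrank_lt hlt (f := φ))
  have hsupp : ∀ e ∉ F, ext c e = 0 := fun e he =>
    Function.extend_apply' _ _ _ (by simpa using he)
  have hne : ∀ v ≠ e₀.1, divergence n (ext c) v = 0 := by
    intro v hv
    by_cases hvF : v ∈ vertexSet F
    · exact congrFun (LinearMap.mem_ker.1 hc) ⟨v, mem_erase.2 ⟨hv, hvF⟩⟩
    · exact divergence_eq_zero_of_notMem_vertexSet hsupp hvF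
  refine ⟨ext c, ?_, hsupp, ?_⟩
  · obtain ⟨e, he⟩ := Function.ne_iff.1 hc0
    exact Function.ne_iff.2 ⟨e, by simpa [ext, Subtype.val_injective.extend_apply] using he⟩
  · ext v
    by_cases hv : v = e₀.1
    · have := sum_divergence_eq_zero (ext c)
      rwa [sum_eq_single_of_mem e₀.1 (mem_univ _) (fun w _ hw => hne w hw), ← hv] at this
    · exact hne v hv

/-- `t` is the first time at which a coordinate of `x + t • g` reaches `0` or `1`. -/
lemma exists_add_mul_mem_Icc_and_eq_zero_or_one {ι : Type*} {s : Finset ι} (hs : s.Nonempty)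
    {x g : ι → ℝ} (hx : ∀ i ∈ s, x i ∈ Set.Ioo 0 1) (hg : ∀ i ∈ s, g i ≠ 0) :
    ∃ t : ℝ, (∀ i ∈ s, x i + t * g i ∈ Set.Icc 0 1) ∧
      ∃ i ∈ s, x i + t * g i = 0 ∨ x i + t * g i = 1 := by
  let τ : ι → ℝ := fun i => if 0 < g i then (1 - x i) / g i else x i / -g i
  have hτ : ∀ i ∈ s, 0 < τ i := fun i hi => by
    obtain ⟨hl, hu⟩ := hx i hi
    by_cases hpos : 0 < g i
    · simpa [τ, hpos] using div_pos (sub_pos.2 hu) hpos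
    · have hneg : 0 < -g i := neg_pos.2 (lt_of_le_of_ne (not_lt.1 hpos) (hg i hi))
      simpa [τ, hpos] using div_pos hl hneg
  obtain ⟨i₀, hi₀, ht⟩ := exists_mem_eq_inf' hs τ
  refine ⟨τ i₀, fun i hi => ?_, i₀, hi₀, ?_⟩
  · have hle : τ i₀ ≤ τ i := ht ▸ inf'_le τ hi
    have ht0 : 0 < τ i₀ := hτ i₀ hi₀
    obtain ⟨hl, hu⟩ := hx i hi
    by_cases hpos : 0 < g i
    · have : τ i₀ * g i ≤ 1 - x i := by
        simpa [τ, hpos, le_div_iff₀ hpos] using hle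
      constructor <;> nlinarith
    · have hneg : 0 < -g i := neg_pos.2 (lt_of_le_of_ne (not_lt.1 hpos) (hg i hi))
      have : τ i₀ * -g i ≤ x i := by
        simpa [τ, hpos, le_div_iff₀ hneg] using hle
      constructor <;> nlinarith
  · by_cases hpos : 0 < g i₀
    · right
      simp only [τ, hpos, if_true]
      field_simp
      ring
    · left
      have hne := hg i₀ hi₀
      simp only [τ, hpos, if_false]
      field_simp
      ring

noncomputable def fracEdges (E : Finset (Fin n × Fin n)) (x : Fin n × Fin n → ℝ) :
    Finset (Fin n × Fin n) :=
  {e ∈ E | x e ≠ 0 ∧ x e ≠ 1}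

section FlowPolytope

variable {E : Finset (Fin n × Fin n)} {d : Fin n → ℤ} {x : Fin n × Fin n → ℝ}

lemma memFlowPolytope.divergence_eq (hx : memFlowPolytope n E d x) (v : Fin n) :
    divergence n x v = d v :=
  hx.2.2 v

lemma memFlowPolytope.mem_Icc (hx : memFlowPolytope n E d x) (e : Fin n × Fin n) :
    x e ∈ Set.Icc 0 1 := by
  by_cases he : e ∈ E
  · exact hx.2.1 e he
  · simp [hx.1 e he]

lemma memFlowPolytope.mem_Ioo_of_mem_fracEdges (hx : memFlowPolytope n E d x)
    {e : Fin n × Fin n} (he : e ∈ fracEdges E x) : x e ∈ Set.Ioo 0 1 := by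
  obtain ⟨heE, h0, h1⟩ := mem_filter.1 he
  obtain ⟨hl, hu⟩ := hx.2.1 e heE
  exact ⟨lt_of_le_of_ne hl (Ne.symm h0), lt_of_le_of_ne hu h1⟩

lemma memFlowPolytope.sub_ind_eq (hx : memFlowPolytope n E d x) (e : Fin n × Fin n) :
    x e - ind n {e ∈ E | x e = 1} e = if e ∈ fracEdges E x then x e else 0 := by
  by_cases heE : e ∈ E
  · by_cases h1 : x e = 1
    · simp [fracEdges, ind, heE, h1]
    · by_cases h0 : x e = 0 <;> simp [fracEdges, ind, heE, h1, h0]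
  · simp [fracEdges, ind, heE, hx.1 e heE]

lemma exists_int_divergence_ind (S : Finset (Fin n × Fin n)) (v : Fin n) :
    ∃ m : ℤ, divergence n (ind n S) v = m :=
  ⟨∑ i, (if (v, i) ∈ S then 1 else 0) - ∑ i, (if (i, v) ∈ S then 1 else 0), by
    simp [divergence_apply, ind]⟩

/-- At a vertex meeting a single fractional edge `a`, conservation would force `x a` to be an
integer, since all other edges at that vertex carry integral flow. -/
lemma memFlowPolytope.degree_fracEdges_ne_one (hx : memFlowPolytope n E d x) (v : Fin n) :
    degree (fracEdges E x) v ≠ 1 := by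
  set F := fracEdges E x
  set z := x - ind n {e ∈ E | x e = 1}
  have hz : ∀ e, z e = if e ∈ F then x e else 0 := hx.sub_ind_eq
  have hzF : ∀ e ∉ F, z e = 0 := fun e he => by simp [hz, he]
  obtain ⟨m, hm⟩ := exists_int_divergence_ind {e ∈ E | x e = 1} v
  have hdiv : divergence n z v = d v - m := by
    rw [map_sub, Pi.sub_apply, hx.divergence_eq, hm]
  rw [divergence_apply, sum_out_eq_sum_filter hzF, sum_in_eq_sum_filter hzF] at hdiv
  intro hdeg
  obtain ⟨a, haF, k, hk⟩ : ∃ a ∈ F, ∃ k : ℤ, x a = k := by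
    rcases Nat.add_eq_one_iff.1 hdeg with ⟨hout, hin⟩ | ⟨hout, hin⟩
    · obtain ⟨a, ha⟩ := card_eq_one.1 hin
      have haF : a ∈ F := (mem_filter.1 (ha ▸ mem_singleton_self a)).1
      rw [card_eq_zero.1 hout, ha, sum_empty, sum_singleton, hz, if_pos haF] at hdiv
      exact ⟨a, haF, m - d v, by push_cast; linarith⟩
    · obtain ⟨a, ha⟩ := card_eq_one.1 hout
      have haF : a ∈ F := (mem_filter.1 (ha ▸ mem_singleton_self a)).1
      rw [card_eq_zero.1 hin, ha, sum_empty, sum_singleton, hz, if_pos haF] at hdiv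
      exact ⟨a, haF, d v - m, by push_cast; linarith⟩
  obtain ⟨hl, hu⟩ := hx.mem_Ioo_of_mem_fracEdges haF
  rw [hk] at hl hu
  norm_cast at hl hu
  omega

lemma memFlowPolytope.exists_card_fracEdges_lt (hx : memFlowPolytope n E d x)
    (hF : (fracEdges E x).Nonempty) :
    ∃ x', memFlowPolytope n E d x' ∧ #(fracEdges E x') < #(fracEdges E x) := by
  obtain ⟨g, hg0, hgF, hgdiv⟩ := exists_circulation hF hx.degree_fracEdges_ne_one
  have hgE : ∀ e ∉ E, g e = 0 := fun e he => hgF e fun h => he (mem_filter.1 h).1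
  have hmemF : ∀ e, g e ≠ 0 → e ∈ fracEdges E x := fun e he => by_contra fun h => he (hgF e h)
  set s := {e ∈ fracEdges E x | g e ≠ 0}
  have hs : s.Nonempty := by
    obtain ⟨e, he⟩ := Function.ne_iff.1 hg0
    exact ⟨e, mem_filter.2 ⟨hmemF e he, he⟩⟩
  obtain ⟨t, hts, e₀, he₀, hbd⟩ := exists_add_mul_mem_Icc_and_eq_zero_or_one hs
    (fun e he => hx.mem_Ioo_of_mem_fracEdges (mem_filter.1 he).1)
    (fun e he => (mem_filter.1 he).2)
  set x' := x + t • g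
  have hx'e : ∀ e, x' e = x e + t * g e := fun e => rfl
  have hx' : memFlowPolytope n E d x' := by
    refine ⟨fun e he => by simp [hx'e, hx.1 e he, hgE e he], fun e he => ?_, fun v => ?_⟩
    · by_cases hge : g e = 0
      · simpa [hx'e, hge] using hx.2.1 e he
      · exact hts e (mem_filter.2 ⟨hmemF e hge, hge⟩)
    · change divergence n x' v = d v
      rw [map_add, map_smul, hgdiv, smul_zero, add_zero, hx.divergence_eq]
  refine ⟨x', hx', card_lt_card ((ssubset_iff_of_subset fun e he => ?_).2
    ⟨e₀, (mem_filter.1 he₀).1, fun h => ?_⟩)⟩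
  · by_cases hge : g e = 0
    · simpa [fracEdges, hx'e, hge] using he
    · exact hmemF e hge
  · obtain ⟨-, h0, h1⟩ := mem_filter.1 h
    exact hbd.elim h0 h1

lemma memFlowPolytope.exists_integral (hx : memFlowPolytope n E d x) :
    ∃ S ⊆ E, memFlowPolytope n E d (ind n S) := by
  induction hk : #(fracEdges E x) using Nat.strong_induction_on generalizing x with
  | _ k ih =>
  rcases (fracEdges E x).eq_empty_or_nonempty with hF | hF
  · refine ⟨{e ∈ E | x e = 1}, filter_subset _ _, ?_⟩
    convert hx using 1
    funext e
    have := hx.sub_ind_eq e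
    rw [hF, if_neg (notMem_empty e)] at this
    linarith
  · obtain ⟨x', hx', hlt⟩ := hx.exists_card_fracEdges_lt hF
    exact ih _ (hk ▸ hlt) hx' rfl

end FlowPolytope

lemma ind_mem_Icc (S : Finset (Fin n × Fin n)) (e : Fin n × Fin n) : ind n S e ∈ Set.Icc 0 1 := by
  unfold ind
  split_ifs <;> simp

lemma divergence_Mf (f x : Fin n × Fin n → ℝ) :
    divergence n (Mf n f x) = divergence n x - divergence n f := by
  ext v
  simp only [divergence_apply, Mf, rev, Pi.sub_apply, mul_sub, sub_mul, mul_one, one_mul,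
    sum_add_distrib, sum_sub_distrib]
  ring

lemma Mf_nonneg {f x : Fin n × Fin n → ℝ} (hf : ∀ e, f e ∈ Set.Icc 0 1)
    (hx : ∀ e, x e ∈ Set.Icc 0 1) (e : Fin n × Fin n) : 0 ≤ Mf n f x e :=
  add_nonneg (mul_nonneg (hx e).1 (sub_nonneg.2 (hf e).2))
    (mul_nonneg (sub_nonneg.2 (hx _).2) (hf _).1)

lemma Mf_ind_pos_or_Mf_ind_rev_pos {S : Finset (Fin n × Fin n)} {x : Fin n × Fin n → ℝ}
    (hx : ∀ e, x e ∈ Set.Icc 0 1) {e : Fin n × Fin n} (he : x e ∈ Set.Ioo 0 1) :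
    0 < Mf n (ind n S) x e ∨ 0 < Mf n (ind n S) x (rev e) := by
  by_cases heS : e ∈ S
  · refine Or.inr (add_pos_of_nonneg_of_pos
      (mul_nonneg (hx _).1 (sub_nonneg.2 (ind_mem_Icc S _).2)) ?_)
    simpa [ind, rev, heS] using he.2
  · refine Or.inl (add_pos_of_pos_of_nonneg ?_
      (mul_nonneg (sub_nonneg.2 (hx _).2) (ind_mem_Icc S _).1))
    simpa [ind, heS] using he.1

noncomputable def posEdges (y : Fin n × Fin n → ℝ) : Finset (Fin n × Fin n) :=
  {e ∈ E0 n | 0 < y e}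

section Circulation

variable {y : Fin n × Fin n → ℝ}

lemma mem_posEdges {u v : Fin n} (huv : u ≠ v) (h : 0 < y (u, v)) : (u, v) ∈ posEdges y :=
  mem_filter.2 ⟨mem_filter.2 ⟨mem_univ _, huv⟩, h⟩

/-- Otherwise the vertices reachable from `v` would form a set that the flow enters (through
`(u, v)`) but never leaves, contradicting conservation. -/
lemma reachesIn_posEdges_of_pos (hy : ∀ e, 0 ≤ y e) (hcirc : divergence n y = 0) {u v : Fin n}
    (huv : 0 < y (u, v)) : reachesIn n (posEdges y) v u := by
  by_contra hvu
  set C : Finset (Fin n) := {w | reachesIn n (posEdges y) v w}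
  have hout : ∀ a ∈ C, ∀ b ∈ Cᶜ, y (a, b) = 0 := by
    intro a ha b hb
    simp only [C, mem_compl, mem_filter, mem_univ, true_and] at ha hb
    refine le_antisymm (not_lt.1 fun hab => hb (Relation.ReflTransGen.tail ha ?_)) (hy _)
    exact mem_posEdges (fun h => hb (h ▸ ha)) hab
  have hflux := sum_divergence_eq_flux y C
  rw [hcirc, sum_eq_zero fun a ha => sum_eq_zero fun b hb => hout a ha b hb] at hflux
  simp only [Pi.zero_apply, sum_const_zero, zero_sub, zero_eq_neg] at hflux
  have hu := (sum_eq_zero_iff_of_nonneg fun a _ => sum_nonneg fun b _ => hy _).1 hflux u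
    (by simpa [C] using hvu)
  have := (sum_eq_zero_iff_of_nonneg fun b _ => hy _).1 hu v
    (by simp only [C, mem_filter, mem_univ, true_and]; exact Relation.ReflTransGen.refl)
  linarith

lemma reachesIn_posEdges_of_connected {E : Finset (Fin n × Fin n)}
    (hconn : (undirGraph n E).Connected) (hy : ∀ e, 0 ≤ y e) (hcirc : divergence n y = 0)
    (hE : ∀ e ∈ E, 0 < y e ∨ 0 < y (rev e)) (u v : Fin n) : reachesIn n (posEdges y) u v := by
  have hadj : ∀ a b, (undirGraph n E).Adj a b → reachesIn n (posEdges y) a b := by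
    rintro a b ⟨hab, hmem⟩
    have : 0 < y (a, b) ∨ 0 < y (b, a) := hmem.elim (hE _) fun h => (hE _ h).symm
    rcases this with h | h
    · exact Relation.ReflTransGen.single (mem_posEdges hab h)
    · exact reachesIn_posEdges_of_pos hy hcirc h
  exact Relation.ReflTransGen.lift' id hadj u v
    ((SimpleGraph.reachable_iff_reflTransGen u v).1 (hconn.preconnected u v))

end Circulation

def ReachesWithin (D : Finset (Fin n × Fin n)) (r : Fin n) : ℕ → Fin n → Prop
  | 0, v => v = r
  | k + 1, v => v = r ∨ ∃ w, (v, w) ∈ D ∧ ReachesWithin D r k w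

lemma exists_reachesWithin_of_reachesIn {D : Finset (Fin n × Fin n)} {r v : Fin n}
    (h : reachesIn n D v r) : ∃ k, ReachesWithin D r k v := by
  induction h using Relation.ReflTransGen.head_induction_on with
  | refl => exact ⟨0, rfl⟩
  | head hstep _ ih =>
    obtain ⟨k, hk⟩ := ih
    exact ⟨k + 1, Or.inr ⟨_, hstep, hk⟩⟩

lemma reachable_of_reachesIn {D : Finset (Fin n × Fin n)} {u v : Fin n}
    (h : reachesIn n D u v) : (undirGraph n D).Reachable u v := by
  refine (SimpleGraph.reachable_iff_reflTransGen u v).2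
    (Relation.ReflTransGen.lift' id (fun a b hab => ?_) u v h)
  by_cases hne : a = b
  · subst hne
    exact Relation.ReflTransGen.refl
  · exact Relation.ReflTransGen.single ⟨hne, Or.inl hab⟩

/-- A breadth-first search tree: every `v ≠ r` points to an out-neighbour closer to `r`. -/
lemma exists_isArb_subset {D : Finset (Fin n × Fin n)} (hD : D ⊆ E0 n) (r : Fin n)
    (hreach : ∀ v, reachesIn n D v r) : ∃ A ⊆ D, IsArb n r A := by
  have hex : ∀ v, ∃ k, ReachesWithin D r k v :=
    fun v => exists_reachesWithin_of_reachesIn (hreach v)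
  have hstep : ∀ v : {v // v ≠ r}, ∃ w, (v.1, w) ∈ D ∧ Nat.find (hex w) < Nat.find (hex v) := by
    rintro ⟨v, hv⟩
    have hspec := Nat.find_spec (hex v)
    obtain ⟨k, hk⟩ := Nat.exists_eq_succ_of_ne_zero fun h : Nat.find (hex v) = 0 =>
      hv (by rwa [h] at hspec)
    rw [hk] at hspec
    rcases hspec with h | ⟨w, hw, hwk⟩
    · exact absurd h hv
    · exact ⟨w, hw, hk ▸ Nat.lt_succ_of_le (Nat.find_min' (hex w) hwk)⟩
  choose p hpD hprank using hstep
  set A := univ.image fun v : {v // v ≠ r} => (v.1, p v)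
  have hAD : A ⊆ D := by
    intro a ha
    obtain ⟨v, -, rfl⟩ := mem_image.1 ha
    exact hpD v
  have hcard : #A = n - 1 := by
    rw [card_image_of_injective _ fun v w h => Subtype.ext (congrArg Prod.fst h)]
    simp
  have hAreach : ∀ v, reachesIn n A v r := by
    intro v
    induction hk : Nat.find (hex v) using Nat.strong_induction_on generalizing v with
    | _ k ih =>
    by_cases hv : v = r
    · subst hv
      exact Relation.ReflTransGen.refl
    · exact Relation.ReflTransGen.head
        (mem_image_of_mem _ (mem_univ (⟨v, hv⟩ : {v // v ≠ r}))) (ih _ (hk ▸ hprank ⟨v, hv⟩) _ rfl)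
  have : Nonempty (Fin n) := ⟨r⟩
  refine ⟨A, hAD, ⟨hAD.trans hD, hcard, ⟨fun u v => ?_⟩⟩, hAreach⟩
  exact (reachable_of_reachesIn (hAreach u)).trans (reachable_of_reachesIn (hAreach v)).symm

lemma rev_rev (e : Fin n × Fin n) : rev (rev e) = e := rfl

lemma mem_image_or_rev_mem_image_iff {A : Finset (Fin n × Fin n)}
    {g : Fin n × Fin n → Fin n × Fin n} (hg : ∀ a, g a = a ∨ g a = rev a) (e : Fin n × Fin n) :
    (e ∈ A.image g ∨ rev e ∈ A.image g) ↔ (e ∈ A ∨ rev e ∈ A) := by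
  constructor
  · simp only [mem_image]
    rintro (⟨a, ha, hae⟩ | ⟨a, ha, hae⟩) <;> rcases hg a with h | h <;> rw [h] at hae
    · exact Or.inl (hae ▸ ha)
    · exact Or.inr (by rwa [← hae, rev_rev])
    · exact Or.inr (hae ▸ ha)
    · exact Or.inl (by rwa [← rev_rev e, ← hae, rev_rev])
  · rintro (h | h)
    · have := mem_image_of_mem g h
      rcases hg e with hge | hge <;> rw [hge] at this
      exacts [Or.inl this, Or.inr this]
    · have := mem_image_of_mem g h
      rcases hg (rev e) with hge | hge <;> rw [hge] at this
      exacts [Or.inr this, Or.inl this]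

lemma undirGraph_image {A : Finset (Fin n × Fin n)} {g : Fin n × Fin n → Fin n × Fin n}
    (hg : ∀ a, g a = a ∨ g a = rev a) : undirGraph n (A.image g) = undirGraph n A := by
  ext u v
  exact and_congr_right fun _ => mem_image_or_rev_mem_image_iff hg (u, v)

lemma IsDirTree.image {A : Finset (Fin n × Fin n)} (hA : IsDirTree n A)
    {g : Fin n × Fin n → Fin n × Fin n} (hinj : Set.InjOn g A)
    (hg : ∀ a, g a = a ∨ g a = rev a) : IsDirTree n (A.image g) := by
  refine ⟨fun e he => ?_, (card_image_of_injOn hinj).trans hA.2.1,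
    (undirGraph_image hg).symm ▸ hA.2.2⟩
  obtain ⟨a, ha, rfl⟩ := mem_image.1 he
  have hne := (mem_filter.1 (hA.1 ha)).2
  rcases hg a with h | h <;> rw [h] <;> simp [E0, rev, hne, Ne.symm hne]

lemma flipEdge_ind (S : Finset (Fin n × Fin n)) (e : Fin n × Fin n) :
    flipEdge n (ind n S) e = if e ∈ S then rev e else e := by
  by_cases he : e ∈ S <;> simp [flipEdge, ind, he]

/-- An edge `a` with `M_f(x)_a > 0` for `f = ind S` is the flip of an edge of `E`: of its reverse
if that lies in `S`, and otherwise of `a` itself, which then lies in `E \ S`. -/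
lemma exists_isDirTree_flipSet_eq {E S : Finset (Fin n × Fin n)} {x : Fin n × Fin n → ℝ}
    (hSE : S ⊆ E) (hxE : ∀ e ∉ E, x e = 0) {A : Finset (Fin n × Fin n)} (hA : IsDirTree n A)
    (hpos : ∀ a ∈ A, 0 < Mf n (ind n S) x a) :
    ∃ T, IsDirTree n T ∧ T ⊆ E ∧ flipSet n (ind n S) T = A := by
  let pull a := if rev a ∈ S then rev a else a
  have key : ∀ a ∈ A, pull a ∈ E ∧ flipEdge n (ind n S) (pull a) = a := by
    intro a ha
    by_cases hra : rev a ∈ S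
    · simp [pull, hra, flipEdge_ind, hSE hra, rev_rev]
    · have h := hpos a ha
      simp only [Mf, ind, hra, if_false, mul_zero, add_zero] at h
      have haE : a ∈ E := by_contra fun hE => by simp [hxE a hE] at h
      have haS : a ∉ S := fun hS => by simp [hS] at h
      simp [pull, hra, flipEdge_ind, haE, haS]
  refine ⟨A.image pull, hA.image (fun a ha b hb hab => ?_) (fun a => ?_), fun e he => ?_, ?_⟩
  · rw [← (key a ha).2, ← (key b hb).2, hab]
  · by_cases h : rev a ∈ S <;> simp [pull, h]
  · obtain ⟨a, ha, rfl⟩ := mem_image.1 he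
    exact (key a ha).1
  · rw [flipSet, image_image]
    exact (image_congr fun a ha => (key a ha).2).trans image_id

section Pfr

variable {E : Finset (Fin n × Fin n)} {x : Fin n × Fin n → ℝ}

lemma ite_pos_of_mem_Ioo {t : ℝ} (ht : t ∈ Set.Ioo 0 1) (p : Prop) [Decidable p] :
    0 < (if p then t else 1 - t) ∧ 0 < (if p then 1 - t else t) := by
  obtain ⟨h0, h1⟩ := ht
  split_ifs <;> constructor <;> linarith

lemma prod_tree_weight_pos (hx01 : ∀ e ∈ E, x e ∈ Set.Ioo 0 1) (f : Fin n × Fin n → ℝ)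
    {T : Finset (Fin n × Fin n)} (hTE : T ⊆ E) :
    0 < ∏ e ∈ T, (if f e = 1 then 1 - x e else x e) :=
  prod_pos fun e he => (ite_pos_of_mem_Ioo (hx01 e (hTE he)) _).2

lemma Pfr_nonneg (hx01 : ∀ e ∈ E, x e ∈ Set.Ioo 0 1) (f : Fin n × Fin n → ℝ) (r : Fin n) :
    0 ≤ Pfr n E f r x :=
  mul_nonneg (prod_pos fun e he => (ite_pos_of_mem_Ioo (hx01 e he) _).1).le
    (sum_nonneg fun _ hT => (prod_tree_weight_pos hx01 f (mem_filter.1 hT).2.2.1).le)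

lemma Pfr_pos (hx01 : ∀ e ∈ E, x e ∈ Set.Ioo 0 1) {f : Fin n × Fin n → ℝ} {r : Fin n}
    {T : Finset (Fin n × Fin n)} (hT : IsDirTree n T) (hTE : T ⊆ E)
    (hA : IsArb n r (flipSet n f T)) : 0 < Pfr n E f r x :=
  mul_pos (prod_pos fun e he => (ite_pos_of_mem_Ioo (hx01 e he) _).1)
    (sum_pos' (fun _ hT => (prod_tree_weight_pos hx01 f (mem_filter.1 hT).2.2.1).le)
      ⟨T, mem_filter.2 ⟨mem_univ _, hT, hTE, hA⟩, prod_tree_weight_pos hx01 f hTE⟩)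

end Pfr

end

theorem sum_Pfr_pos_general (n : ℕ)
    (E : Finset (Fin n × Fin n)) (d : Fin n → ℤ)
    (hconn : (undirGraph n E).Connected)
    (r : Fin n) (x : Fin n × Fin n → ℝ) (hx : memFlowPolytope n E d x)
    (hx01 : ∀ e ∈ E, x e ∈ Set.Ioo (0 : ℝ) 1) :
    0 < ∑ S ∈ flowVertices n E d, Pfr n E (ind n S) r x := by
  obtain ⟨S, hSE, hS⟩ := hx.exists_integral
  set y := Mf n (ind n S) x
  have hy : ∀ e, 0 ≤ y e := Mf_nonneg (ind_mem_Icc S) hx.mem_Icc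
  have hcirc : divergence n y = 0 := by
    ext v
    simp [y, divergence_Mf, hx.divergence_eq, hS.divergence_eq]
  have hreach : ∀ v, reachesIn n (posEdges y) v r := fun v =>
    reachesIn_posEdges_of_connected hconn hy hcirc
      (fun e he => Mf_ind_pos_or_Mf_ind_rev_pos hx.mem_Icc (hx01 e he)) v r
  obtain ⟨A, hAy, hA⟩ := exists_isArb_subset (filter_subset _ _) r hreach
  obtain ⟨T, hT, hTE, hTA⟩ :=
    exists_isDirTree_flipSet_eq hSE hx.1 hA.1 fun a ha => (mem_filter.1 (hAy ha)).2
  exact sum_pos' (fun S' _ => Pfr_nonneg hx01 _ _)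
    ⟨S, mem_filter.2 ⟨mem_univ _, hSE, hS⟩, Pfr_pos hx01 hT hTE (hTA ▸ hA)⟩

/-- condition (4): `∑_f P_{f,r}(x) > 0` on the open part of `P`. -/
theorem sum_Pfr_pos (n : ℕ) (hn : 2 ≤ n)
    (E : Finset (Fin n × Fin n)) (hE : E ⊆ E0 n) (d : Fin n → ℤ)
    (hconn : (undirGraph n E).Connected)
    (r : Fin n) (x : Fin n × Fin n → ℝ) (hx : memFlowPolytope n E d x)
    (hx01 : ∀ e ∈ E, x e ∈ Set.Ioo (0 : ℝ) 1) :
    0 < ∑ S ∈ flowVertices n E d, Pfr n E (ind n S) r x :=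
  sum_Pfr_pos_general n E d hconn r x hx hx01
end

section
/- (ZLS matrices have equal cofactors) Let A be an n×n real matrix such that ∑_{j=1}^n A_{ij} = 0 and ∑_{j=1}^n A_{ji} = 0 for every i ∈ [n]. For r ∈ [n], let A^{(r)} denote the (n−1)×(n−1) submatrix obtained by deleting the r-th row and r-th column of A. Then det(A^{(r)}) = det(A^{(r')}) for all r, r' ∈ [n]. -/
open Finset

open scoped Classical

/-! If the columns of `A` sum to zero, each row of `A` is minus the sum of the others, so the
minors obtained by deleting row `i` or row `i'` (and the same column) agree up to the sign
`(-1)^(i - i')`; zero row sums give the same for columns. Moving both the deleted row and the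
deleted column from `r` to `r'` thus multiplies the principal minor by `((-1)^(r - r'))^2 = 1`. -/

namespace Matrix

variable {R : Type*} [CommRing R] {n : ℕ} (A : Matrix (Fin (n + 1)) (Fin (n + 1)) R)

theorem det_submatrix_succAbove_eq_negOnePow_of_sum_col_eq_zero
    (hcol : ∀ j, ∑ i, A i j = 0) (i₁ i₂ j : Fin (n + 1)) :
    (A.submatrix i₁.succAbove j.succAbove).det
      = Int.negOnePow (i₁ - i₂) • (A.submatrix i₂.succAbove j.succAbove).det := by
  have hsum : ∑ i, A.submatrix id j.succAbove i = 0 := by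
    ext k
    exact (Finset.sum_apply k _ _).trans (hcol (j.succAbove k))
  exact submatrix_succAbove_det_eq_negOnePow_submatrix_succAbove_det _ hsum i₁ i₂

theorem det_submatrix_succAbove_eq_negOnePow_of_sum_row_eq_zero
    (hrow : ∀ i, ∑ j, A i j = 0) (i j₁ j₂ : Fin (n + 1)) :
    (A.submatrix i.succAbove j₁.succAbove).det
      = Int.negOnePow (j₁ - j₂) • (A.submatrix i.succAbove j₂.succAbove).det :=
  submatrix_succAbove_det_eq_negOnePow_submatrix_succAbove_det' (A.submatrix i.succAbove id)
    (fun k => hrow (i.succAbove k)) j₁ j₂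

end Matrix

/-- ZLS matrices have equal cofactors. -/
theorem zls_equal_cofactors (n : ℕ)
    (A : Matrix (Fin (n + 1)) (Fin (n + 1)) ℝ)
    (hrow : ∀ i, ∑ j, A i j = 0) (hcol : ∀ i, ∑ j, A j i = 0)
    (r r' : Fin (n + 1)) :
    (A.submatrix r.succAbove r.succAbove).det
      = (A.submatrix r'.succAbove r'.succAbove).det := by
  rw [A.det_submatrix_succAbove_eq_negOnePow_of_sum_col_eq_zero hcol r r',
    A.det_submatrix_succAbove_eq_negOnePow_of_sum_row_eq_zero hrow r' r r', smul_smul,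
    ← Int.negOnePow_add, ← two_mul, Int.negOnePow_two_mul, one_smul]
end
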